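/- arXiv:1705.02944 — 8 statements merged into one kernel-verified Lean document; each statement's English description precedes it below -/
import Mathlib

section
/- Let L_G be the Laplacian matrix of a connected undirected graph on n vertices with all edge weights equal to 1. Then the smallest nonzero eigenvalue of L_G is at least 1/n². -/
open Matrix

private lemma walk_telescope {n : ℕ} {G : SimpleGraph (Fin n)} (x : Fin n → ℝ)
    {a b : Fin n} (w : G.Walk a b) :
    x a - x b = (w.darts.map (fun d => x d.toProd.1 - x d.toProd.2)).sum := by
  induction w with
  | nil => simp
  | @cons u v c h p ih =>
      simp only [SimpleGraph.Walk.darts_cons, List.map_cons, List.sum_cons, ← ih]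
      ring

/-- For the Laplacian of a connected unit-weight graph on `n ≥ 2` vertices, the smallest
nonzero eigenvalue is at least `1/n²`: for every `x` orthogonal to the all-ones vector
(the null space of `L_G`), `xᵀ L_G x ≥ (1/n²) xᵀ x`. -/
theorem stmt6 {n : ℕ} (hn : 2 ≤ n) (G : SimpleGraph (Fin n)) [DecidableRel G.Adj]
    (hG : G.Connected) (x : Fin n → ℝ) (hx : ∑ i, x i = 0) :
    (1 / (n : ℝ) ^ 2) * (x ⬝ᵥ x) ≤ x ⬝ᵥ (G.lapMatrix ℝ *ᵥ x) := by
  classical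
  set Q : ℝ := ∑ i : Fin n, ∑ j : Fin n, if G.Adj i j then (x i - x j) ^ 2 else 0 with hQ
  have hLx : x ⬝ᵥ (G.lapMatrix ℝ *ᵥ x) = Q / 2 := by
    rw [← Matrix.toLinearMap₂'_apply', SimpleGraph.lapMatrix_toLinearMap₂']
  -- key per-pair bound
  have key : ∀ a b : Fin n, (x a - x b) ^ 2 ≤ (n : ℝ) * Q := by
    intro a b
    obtain ⟨w⟩ := hG a b
    set p : G.Walk a b := (w.toPath : G.Walk a b) with hp
    have hpath : p.IsPath := (w.toPath).property
    have hnodup : p.darts.Nodup := by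
      have := hpath.isTrail.edges_nodup
      rw [SimpleGraph.Walk.edges] at this
      exact this.of_map _
    set s : Finset (G.Dart) := p.darts.toFinset with hs
    have hsum : x a - x b = ∑ d ∈ s, (x d.toProd.1 - x d.toProd.2) := by
      rw [walk_telescope x p, hs, List.sum_toFinset _ hnodup]
    have hcard : (s.card : ℝ) ≤ (n : ℝ) := by
      have h1 : s.card = p.length := by
        rw [hs, List.toFinset_card_of_nodup hnodup, SimpleGraph.Walk.length_darts]
      have h2 : p.length < n := by
        simpa [Fintype.card_fin] using hpath.length_lt
      exact_mod_cast (h1 ▸ h2).le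
    have hQ_nonneg_terms : ∀ i j : Fin n, (0:ℝ) ≤ if G.Adj i j then (x i - x j) ^ 2 else 0 := by
      intro i j; split <;> positivity
    have hsq : (∑ d ∈ s, (x d.toProd.1 - x d.toProd.2)) ^ 2
        ≤ (s.card : ℝ) * ∑ d ∈ s, (x d.toProd.1 - x d.toProd.2) ^ 2 :=
      sq_sum_le_card_mul_sum_sq
    have hsub : ∑ d ∈ s, (x d.toProd.1 - x d.toProd.2) ^ 2 ≤ Q := by
      have himg : ∑ d ∈ s, (x d.toProd.1 - x d.toProd.2) ^ 2
          = ∑ pr ∈ s.image SimpleGraph.Dart.toProd,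
              (if G.Adj pr.1 pr.2 then (x pr.1 - x pr.2) ^ 2 else 0) := by
        rw [Finset.sum_image (fun d _ e _ h => SimpleGraph.Dart.toProd_injective h)]
        refine Finset.sum_congr rfl fun d _ => ?_
        rw [if_pos d.adj]
      rw [himg, hQ, ← Finset.sum_product']
      exact Finset.sum_le_sum_of_subset_of_nonneg (Finset.subset_univ _)
        (fun pr _ _ => hQ_nonneg_terms pr.1 pr.2)
    calc (x a - x b) ^ 2 = (∑ d ∈ s, (x d.toProd.1 - x d.toProd.2)) ^ 2 := by rw [hsum]
      _ ≤ (s.card : ℝ) * ∑ d ∈ s, (x d.toProd.1 - x d.toProd.2) ^ 2 := hsq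
      _ ≤ (n : ℝ) * Q := by
          apply mul_le_mul hcard hsub (Finset.sum_nonneg fun d _ => by positivity)
          positivity
  -- the double-sum identity
  have hdbl : ∑ a : Fin n, ∑ b : Fin n, (x a - x b) ^ 2 = 2 * n * (x ⬝ᵥ x) := by
    have : ∀ a b : Fin n, (x a - x b) ^ 2 = x a ^ 2 - 2 * (x a * x b) + x b ^ 2 := by
      intro a b; ring
    simp only [this, Finset.sum_add_distrib, Finset.sum_sub_distrib, Finset.sum_const,
      Finset.card_univ, Fintype.card_fin, ← Finset.mul_sum, ← Finset.sum_mul, hx,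
      dotProduct]
    simp only [pow_two, nsmul_eq_mul, mul_comm]
    simp only [← Finset.sum_mul]
    ring
  have hsumbound : ∑ a : Fin n, ∑ b : Fin n, (x a - x b) ^ 2 ≤ (n : ℝ)^2 * ((n : ℝ) * Q) := by
    calc ∑ a : Fin n, ∑ b : Fin n, (x a - x b) ^ 2
        ≤ ∑ _a : Fin n, ∑ _b : Fin n, (n : ℝ) * Q :=
          Finset.sum_le_sum fun a _ => Finset.sum_le_sum fun b _ => key a b
      _ = (n : ℝ)^2 * ((n : ℝ) * Q) := by
          simp [Finset.sum_const, Finset.card_univ, Fintype.card_fin]; ring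
  have hn0 : (0:ℝ) < n := by positivity
  rw [hLx]
  rw [hdbl] at hsumbound
  rw [div_mul_eq_mul_div, one_mul, div_le_div_iff₀ (by positivity) (by norm_num)]
  nlinarith [hsumbound, sq_nonneg (n:ℝ)]
end

section
/- Let A ∈ ℝ^{m×n} and A^Z = [A | −A𝟙]. Then the smallest nonzero eigenvalue satisfies λ_min⁺((A^Z)ᵀ A^Z) ≥ λ_min⁺(Aᵀ A)/(n+1). -/
/-!
Write `A' = [A | A b]` (here `b = -𝟙`) and `λ = λ_min⁺(AᵀA)`. A unit vector `z = (u, t)` orthogonal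
to `ker A'` is orthogonal to `(y, 0)` for `y ∈ ker A` and to `(b, -1)`, so `u ⊥ ker A` and
`t = ⟪u, b⟫`; moreover `A' z = A w` with `w = u + t b`. Let `p` be the component of `w` orthogonal
to `ker A`. Then `⟪u, p⟫ = ⟪u, w⟫ = ‖u‖² + t² = 1` while `‖u‖ ≤ 1`, so `‖p‖ ≥ 1` by Cauchy–Schwarz
and `‖A' z‖² = ‖A p‖² ≥ λ ‖p‖² ≥ λ`. Hence appending the column `A b` does not decrease `λ_min⁺`,
and the factor `1 / (n + 1)` costs nothing.
-/

open Matrix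

/-- The matrix `A^Z = [A | −A𝟙]`, i.e. `A` with an extra column `−A𝟙` appended. -/
noncomputable def appendNegRowSum {m n : ℕ} (A : Matrix (Fin m) (Fin n) ℝ) :
    Matrix (Fin m) (Fin n ⊕ Unit) ℝ :=
  Matrix.fromCols A (Matrix.of fun i (_ : Unit) => -(A *ᵥ 1) i)

/-- The smallest nonzero eigenvalue of a symmetric PSD matrix: the infimum of the Rayleigh
quotient over unit vectors orthogonal to the null space. -/
noncomputable def lminPos {k : Type*} [Fintype k] (M : Matrix k k ℝ) : ℝ :=
  sInf {r : ℝ | ∃ x : k → ℝ, x ⬝ᵥ x = 1 ∧ (∀ y, M *ᵥ y = 0 → x ⬝ᵥ y = 0) ∧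
    r = x ⬝ᵥ (M *ᵥ x)}

section DotProduct

variable {R ι : Type*} [CommRing R] [LinearOrder R] [IsStrictOrderedRing R] [Fintype ι]

lemma dotProduct_self_nonneg (v : ι → R) : 0 ≤ v ⬝ᵥ v :=
  Fintype.sum_nonneg fun _ => mul_self_nonneg _

lemma dotProduct_sq_le_mul (u v : ι → R) : (u ⬝ᵥ v) ^ 2 ≤ (u ⬝ᵥ u) * (v ⬝ᵥ v) := by
  simpa only [dotProduct, sq] using Finset.sum_mul_sq_le_sq_mul_sq Finset.univ u v

end DotProduct

section Gram

variable {ι κ : Type*} [Fintype ι] (B : Matrix κ ι ℝ)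

lemma exists_orthogonal_ker_mulVec_eq (w : ι → ℝ) :
    ∃ p : ι → ℝ, (∀ y, B *ᵥ y = 0 → p ⬝ᵥ y = 0) ∧ B *ᵥ p = B *ᵥ w := by
  classical
  let K := LinearMap.ker (toLpLin 2 2 B)
  obtain ⟨k, hk, p, hp, hw⟩ := K.exists_add_mem_mem_orthogonal (WithLp.toLp 2 w)
  refine ⟨p.ofLp, fun y hy => ?_, ?_⟩
  · have hyK : WithLp.toLp 2 y ∈ K := by simpa [K, toLpLin_apply] using hy
    simpa [EuclideanSpace.inner_eq_star_dotProduct, dotProduct_comm] using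
      (K.mem_orthogonal' p).mp hp _ hyK
  · have hBk : B *ᵥ k.ofLp = 0 := by simpa [K, toLpLin_apply] using hk
    rw [← WithLp.ofLp_toLp 2 w, hw, WithLp.ofLp_add, mulVec_add, hBk, zero_add]

lemma exists_smul_eq_of_orthogonal_ker_mulVec {p : ι → ℝ} (hp : p ≠ 0)
    (hpB : ∀ y, B *ᵥ y = 0 → p ⬝ᵥ y = 0) :
    ∃ (t : ℝ) (x : ι → ℝ), x ⬝ᵥ x = 1 ∧ (∀ y, B *ᵥ y = 0 → x ⬝ᵥ y = 0) ∧ p = t • x := by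
  have hpos : 0 < p ⬝ᵥ p :=
    (dotProduct_self_nonneg p).lt_of_ne' (dotProduct_self_eq_zero.not.mpr hp)
  have ht : √(p ⬝ᵥ p) ≠ 0 := (Real.sqrt_pos.mpr hpos).ne'
  refine ⟨√(p ⬝ᵥ p), (√(p ⬝ᵥ p))⁻¹ • p, ?_, fun y hy => ?_, ?_⟩
  · rw [smul_dotProduct, dotProduct_smul, smul_eq_mul, smul_eq_mul, ← mul_assoc, ← mul_inv,
      Real.mul_self_sqrt hpos.le, inv_mul_cancel₀ hpos.ne']
  · rw [smul_dotProduct, hpB y hy, smul_zero]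
  · rw [smul_smul, mul_inv_cancel₀ ht, one_smul]

variable [Fintype κ]

lemma lminPos_transpose_mul_self : lminPos (Bᵀ * B) =
    sInf {r : ℝ | ∃ x : ι → ℝ, x ⬝ᵥ x = 1 ∧ (∀ y, B *ᵥ y = 0 → x ⬝ᵥ y = 0) ∧
      r = (B *ᵥ x) ⬝ᵥ (B *ᵥ x)} := by
  have hker (y : ι → ℝ) : (Bᵀ * B) *ᵥ y = 0 ↔ B *ᵥ y = 0 := by
    simpa only [LinearMap.mem_ker, mulVecLin_apply] using
      SetLike.ext_iff.mp (ker_mulVecLin_transpose_mul_self B) y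
  have hquad (x : ι → ℝ) : x ⬝ᵥ ((Bᵀ * B) *ᵥ x) = (B *ᵥ x) ⬝ᵥ (B *ᵥ x) := by
    rw [← mulVec_mulVec, dotProduct_mulVec, vecMul_transpose]
  simp only [lminPos, hker, hquad]

lemma lminPos_transpose_mul_self_nonneg : 0 ≤ lminPos (Bᵀ * B) := by
  rw [lminPos_transpose_mul_self]
  refine Real.sInf_nonneg ?_
  rintro r ⟨x, -, -, rfl⟩
  exact dotProduct_self_nonneg _

lemma lminPos_transpose_mul_self_mul_le {p : ι → ℝ} (hpB : ∀ y, B *ᵥ y = 0 → p ⬝ᵥ y = 0) :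
    lminPos (Bᵀ * B) * (p ⬝ᵥ p) ≤ (B *ᵥ p) ⬝ᵥ (B *ᵥ p) := by
  rcases eq_or_ne p 0 with rfl | hp
  · simp
  obtain ⟨t, x, hx, hxB, rfl⟩ := exists_smul_eq_of_orthogonal_ker_mulVec B hp hpB
  have hle : lminPos (Bᵀ * B) ≤ (B *ᵥ x) ⬝ᵥ (B *ᵥ x) := by
    rw [lminPos_transpose_mul_self]
    refine csInf_le ⟨0, ?_⟩ ⟨x, hx, hxB, rfl⟩
    rintro r ⟨v, -, -, rfl⟩
    exact dotProduct_self_nonneg _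
  simp only [mulVec_smul, smul_dotProduct, dotProduct_smul, smul_eq_mul, hx]
  nlinarith [sq_nonneg t]

lemma le_lminPos_transpose_mul_self (hB : B ≠ 0) {c : ℝ}
    (h : ∀ x, x ⬝ᵥ x = 1 → (∀ y, B *ᵥ y = 0 → x ⬝ᵥ y = 0) → c ≤ (B *ᵥ x) ⬝ᵥ (B *ᵥ x)) :
    c ≤ lminPos (Bᵀ * B) := by
  obtain ⟨w, hw⟩ : ∃ w, B *ᵥ w ≠ 0 := by
    classical
    by_contra! h0
    exact hB (ext_of_mulVec_single fun j => by rw [h0, zero_mulVec])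
  obtain ⟨p, hpB, hBp⟩ := exists_orthogonal_ker_mulVec_eq B w
  have hp : p ≠ 0 := by
    rintro rfl
    exact hw (by rw [← hBp, mulVec_zero])
  obtain ⟨-, x, hx, hxB, -⟩ := exists_smul_eq_of_orthogonal_ker_mulVec B hp hpB
  rw [lminPos_transpose_mul_self]
  refine le_csInf ⟨_, x, hx, hxB, rfl⟩ ?_
  rintro r ⟨z, hz, hzB, rfl⟩
  exact h z hz hzB

end Gram

section AppendColumn

variable {R κ ι : Type*}

def appendCol (A : Matrix κ ι R) (c : κ → R) : Matrix κ (ι ⊕ Unit) R :=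
  fromCols A (replicateCol Unit c)

lemma appendCol_mulVec_sumElim [CommSemiring R] [Fintype ι] (A : Matrix κ ι R) (c : κ → R)
    (y : ι → R) (s : R) : appendCol A c *ᵥ Sum.elim y (fun _ => s) = A *ᵥ y + s • c := by
  rw [appendCol, fromCols_mulVec_sumElim]
  congr 1
  ext i
  simp [mulVec, dotProduct, replicateCol, mul_comm]

lemma appendCol_ne_zero [Zero R] {A : Matrix κ ι R} (hA : A ≠ 0) (c : κ → R) :
    appendCol A c ≠ 0 := fun h => hA <| by
  ext i j
  simpa [appendCol] using congrFun (congrFun h i) (Sum.inl j)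

end AppendColumn

section AppendMulVec

variable {ι κ : Type*} [Fintype ι] [Fintype κ] (A : Matrix κ ι ℝ) (b : ι → ℝ)

lemma lminPos_transpose_mul_self_le_mulVec_add_smul {u : ι → ℝ}
    (huA : ∀ y, A *ᵥ y = 0 → u ⬝ᵥ y = 0) (hu : u ⬝ᵥ u + (u ⬝ᵥ b) ^ 2 = 1) :
    lminPos (Aᵀ * A) ≤ (A *ᵥ (u + (u ⬝ᵥ b) • b)) ⬝ᵥ (A *ᵥ (u + (u ⬝ᵥ b) • b)) := by
  set w := u + (u ⬝ᵥ b) • b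
  obtain ⟨p, hpA, hAp⟩ := exists_orthogonal_ker_mulVec_eq A w
  have hup : u ⬝ᵥ p = 1 := by
    have hwp : u ⬝ᵥ (w - p) = 0 := huA _ (by rw [mulVec_sub, hAp, sub_self])
    rw [dotProduct_sub, dotProduct_add, dotProduct_smul, smul_eq_mul] at hwp
    linarith
  have hp : 1 ≤ p ⬝ᵥ p := by
    nlinarith [dotProduct_sq_le_mul u p, dotProduct_self_nonneg p, sq_nonneg (u ⬝ᵥ b)]
  calc lminPos (Aᵀ * A)
      ≤ lminPos (Aᵀ * A) * (p ⬝ᵥ p) :=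
        le_mul_of_one_le_right (lminPos_transpose_mul_self_nonneg A) hp
    _ ≤ (A *ᵥ p) ⬝ᵥ (A *ᵥ p) := lminPos_transpose_mul_self_mul_le A hpA
    _ = (A *ᵥ w) ⬝ᵥ (A *ᵥ w) := by rw [hAp]

lemma lminPos_transpose_mul_self_le_appendCol_mulVec (hA : A ≠ 0) :
    lminPos (Aᵀ * A) ≤ lminPos ((appendCol A (A *ᵥ b))ᵀ * appendCol A (A *ᵥ b)) := by
  have hmulVec (y : ι → ℝ) (s : ℝ) :
      appendCol A (A *ᵥ b) *ᵥ Sum.elim y (fun _ => s) = A *ᵥ (y + s • b) := by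
    rw [appendCol_mulVec_sumElim, mulVec_add, mulVec_smul]
  refine le_lminPos_transpose_mul_self _ (appendCol_ne_zero hA _) fun z hz hzker => ?_
  obtain ⟨u, t, rfl⟩ : ∃ u t, z = Sum.elim u fun _ => t :=
    ⟨z ∘ Sum.inl, z (Sum.inr ()), by ext (_ | _) <;> rfl⟩
  have huA : ∀ y, A *ᵥ y = 0 → u ⬝ᵥ y = 0 := fun y hy => by
    simpa [sumElim_dotProduct_sumElim] using
      hzker (Sum.elim y fun _ => 0) (by rw [hmulVec, zero_smul, add_zero, hy])
  have ht : t = u ⬝ᵥ b := by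
    have := hzker (Sum.elim b fun _ => -1) (by rw [hmulVec, neg_one_smul, add_neg_cancel, mulVec_zero])
    simp only [sumElim_dotProduct_sumElim, dotProduct_pUnit, mul_neg, mul_one] at this
    linarith
  have hu : u ⬝ᵥ u + t ^ 2 = 1 := by
    simpa [sumElim_dotProduct_sumElim, sq] using hz
  rw [hmulVec, ht]
  exact lminPos_transpose_mul_self_le_mulVec_add_smul A b huA (ht ▸ hu)

end AppendMulVec

/-- `λ_min⁺((A^Z)ᵀ A^Z) ≥ λ_min⁺(Aᵀ A)/(n+1)` where `A^Z = [A | −A𝟙]` and `A ≠ 0`. -/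
theorem stmt10 {m n : ℕ} (A : Matrix (Fin m) (Fin n) ℝ) (hA : A ≠ 0) :
    lminPos (Aᵀ * A) / ((n : ℝ) + 1) ≤
      lminPos ((appendNegRowSum A)ᵀ * appendNegRowSum A) := by
  have hAZ : appendNegRowSum A = appendCol A (A *ᵥ -1) := by
    ext i (j | _) <;> simp [appendNegRowSum, appendCol, mulVec_neg]
  calc lminPos (Aᵀ * A) / ((n : ℝ) + 1)
      ≤ lminPos (Aᵀ * A) := div_le_self (lminPos_transpose_mul_self_nonneg A) (by simp)
    _ ≤ _ := hAZ ▸ lminPos_transpose_mul_self_le_appendCol_mulVec A (-1) hA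
end

section
/- Let A ∈ ℝ^{m×n}, a ∈ ℝᵐ, w > 0, c ∈ ℝᵐ, and consider A₂ = [[A, a, −a],[0, w, −w]] and c₂ = (c; 0). Then min over (x, α) of ‖A₂ (x; α; −α) − c₂‖₂² equals min over x of (Ax − c)ᵀ P (Ax − c), where P = I − aaᵀ/(w² + ‖a‖₂²). Consequently, if (s*; α; −α) minimizes ‖A₂ y − c₂‖₂ over vectors of this form, then s* minimizes ‖Ax − c‖_P. -/
open Matrix

/-- The block matrix `A₂ = [[A, a, −a],[0, w, −w]]`. -/
def extendTwo {m n : ℕ} (A : Matrix (Fin m) (Fin n) ℝ) (a : Fin m → ℝ) (w : ℝ) :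
    Matrix (Fin m ⊕ Unit) (Fin n ⊕ Fin 2) ℝ :=
  Matrix.of fun i j =>
    Sum.elim
      (fun i' => Sum.elim (fun k => A i' k) (fun t => if t = 0 then a i' else -a i') j)
      (fun _ => Sum.elim (fun _ => 0) (fun t => if t = 0 then w else -w) j) i

/-- `‖A₂ (x; α; −α) − c₂‖₂²` where `c₂ = (c; 0)`. -/
def quadTwo {m n : ℕ} (A : Matrix (Fin m) (Fin n) ℝ) (a : Fin m → ℝ) (w : ℝ)
    (c : Fin m → ℝ) (x : Fin n → ℝ) (α : ℝ) : ℝ :=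
  (extendTwo A a w *ᵥ Sum.elim x (fun t => if t = 0 then α else -α) - Sum.elim c 0) ⬝ᵥ
    (extendTwo A a w *ᵥ Sum.elim x (fun t => if t = 0 then α else -α) - Sum.elim c 0)

/-- `(Ax − c)ᵀ P (Ax − c)` with `P = I − aaᵀ/(w² + ‖a‖₂²)`. -/
noncomputable def quadP {m n : ℕ} (A : Matrix (Fin m) (Fin n) ℝ) (a : Fin m → ℝ) (w : ℝ)
    (c : Fin m → ℝ) (x : Fin n → ℝ) : ℝ :=
  (A *ᵥ x - c) ⬝ᵥ
    (((1 : Matrix (Fin m) (Fin m) ℝ) - (w ^ 2 + a ⬝ᵥ a)⁻¹ • Matrix.vecMulVec a a) *ᵥ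
      (A *ᵥ x - c))

lemma quadTwo_eq' {m n : ℕ} (A : Matrix (Fin m) (Fin n) ℝ) (a : Fin m → ℝ) (w : ℝ)
    (c : Fin m → ℝ) (x : Fin n → ℝ) (α : ℝ) :
    quadTwo A a w c x α =
      ((A *ᵥ x - c) ⬝ᵥ (A *ᵥ x - c)) + 4*α*(a ⬝ᵥ (A *ᵥ x - c)) + 4*α^2*(a ⬝ᵥ a) + 4*α^2*w^2 := by
  have hv : (extendTwo A a w *ᵥ Sum.elim x (fun t => if t = 0 then α else -α) - Sum.elim c 0)
      = Sum.elim (fun i => (A *ᵥ x - c) i + 2*α*a i) (fun _ => 2*α*w) := by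
    funext i
    cases i with
    | inl i =>
        simp [extendTwo, Matrix.mulVec, dotProduct, Fintype.sum_sum_type, Fin.sum_univ_two]
        ring
    | inr u =>
        simp [extendTwo, Matrix.mulVec, dotProduct, Fintype.sum_sum_type, Fin.sum_univ_two]
        ring
  unfold quadTwo
  rw [hv]
  simp only [dotProduct, Fintype.sum_sum_type, Finset.univ_unique, Finset.sum_const,
    Finset.card_singleton, one_smul, Sum.elim_inl, Sum.elim_inr]
  have hs : ∀ i : Fin m, ((A *ᵥ x - c) i + 2*α*a i) * ((A *ᵥ x - c) i + 2*α*a i)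
      = (A *ᵥ x - c) i * (A *ᵥ x - c) i + 4*α*(a i * (A *ᵥ x - c) i)
        + 4*α^2*(a i * a i) := fun i => by ring
  simp only [hs, Finset.sum_add_distrib, ← Finset.mul_sum]
  ring

lemma quadP_eq' {m n : ℕ} (A : Matrix (Fin m) (Fin n) ℝ) (a : Fin m → ℝ) (w : ℝ)
    (c : Fin m → ℝ) (x : Fin n → ℝ) :
    quadP A a w c x =
      ((A *ᵥ x - c) ⬝ᵥ (A *ᵥ x - c)) - (a ⬝ᵥ (A *ᵥ x - c))^2 * (w^2 + a ⬝ᵥ a)⁻¹ := by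
  have hvv : Matrix.vecMulVec a a *ᵥ (A *ᵥ x - c) = (a ⬝ᵥ (A *ᵥ x - c)) • a := by
    funext i
    simp [Matrix.vecMulVec_apply, Matrix.mulVec, dotProduct, Finset.mul_sum]
    ring_nf
    rw [Finset.mul_sum]
    congr 1; funext j; ring
  unfold quadP
  rw [Matrix.sub_mulVec, Matrix.smul_mulVec, Matrix.one_mulVec, dotProduct_sub, hvv,
    dotProduct_smul, dotProduct_smul, dotProduct_comm (A *ᵥ x - c) a, smul_eq_mul, smul_eq_mul]
  ring

/-- The minimum over `(x, α)` of `‖A₂ (x; α; −α) − c₂‖₂²` equals the minimum over `x` of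
`(Ax − c)ᵀ P (Ax − c)` with `P = I − aaᵀ/(w² + ‖a‖₂²)`; consequently any minimizer
`(s*; α; −α)` of the former yields a minimizer `s*` of `‖Ax − c‖_P`. -/
theorem stmt12 {m n : ℕ} (A : Matrix (Fin m) (Fin n) ℝ) (a : Fin m → ℝ)
    (w : ℝ) (hw : 0 < w) (c : Fin m → ℝ) :
    sInf {v : ℝ | ∃ x : Fin n → ℝ, ∃ α : ℝ, v = quadTwo A a w c x α} =
        sInf {v : ℝ | ∃ x : Fin n → ℝ, v = quadP A a w c x} ∧
      ∀ (s : Fin n → ℝ) (α₀ : ℝ),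
        (∀ (x : Fin n → ℝ) (α : ℝ), quadTwo A a w c s α₀ ≤ quadTwo A a w c x α) →
          ∀ x : Fin n → ℝ, quadP A a w c s ≤ quadP A a w c x := by
  set S : ℝ := w ^ 2 + a ⬝ᵥ a with hSdef
  have haa : 0 ≤ a ⬝ᵥ a := Finset.sum_nonneg fun i _ => mul_self_nonneg (a i)
  have hS : 0 < S := by positivity
  have hS0 : S ≠ 0 := ne_of_gt hS
  have key : ∀ (x : Fin n → ℝ) (α : ℝ),
      quadTwo A a w c x α =
        quadP A a w c x + S * (2*α + (a ⬝ᵥ (A *ᵥ x - c)) * S⁻¹)^2 := by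
    intro x α
    rw [quadTwo_eq', quadP_eq']
    field_simp
    ring
  have hle : ∀ (x : Fin n → ℝ) (α : ℝ), quadP A a w c x ≤ quadTwo A a w c x α := by
    intro x α
    rw [key]
    exact le_add_of_nonneg_right (mul_nonneg hS.le (sq_nonneg _))
  have hach : ∀ x : Fin n → ℝ,
      quadTwo A a w c x (-((a ⬝ᵥ (A *ᵥ x - c)) * S⁻¹) / 2) = quadP A a w c x := by
    intro x
    rw [key]
    have h0 : (2*(-((a ⬝ᵥ (A *ᵥ x - c)) * S⁻¹) / 2) + (a ⬝ᵥ (A *ᵥ x - c)) * S⁻¹) = 0 := by ring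
    rw [h0]
    simp
  have hT2nonneg : ∀ (x : Fin n → ℝ) (α : ℝ), 0 ≤ quadTwo A a w c x α := by
    intro x α
    unfold quadTwo dotProduct
    exact Finset.sum_nonneg fun i _ => mul_self_nonneg _
  have hPnonneg : ∀ x : Fin n → ℝ, 0 ≤ quadP A a w c x := by
    intro x
    rw [← hach x]
    exact hT2nonneg _ _
  set T : Set ℝ := {v : ℝ | ∃ x : Fin n → ℝ, ∃ α : ℝ, v = quadTwo A a w c x α}
  set Q : Set ℝ := {v : ℝ | ∃ x : Fin n → ℝ, v = quadP A a w c x}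
  have hTbdd : BddBelow T := ⟨0, fun v ⟨x, α, hv⟩ => hv ▸ hT2nonneg x α⟩
  have hQbdd : BddBelow Q := ⟨0, fun v ⟨x, hv⟩ => hv ▸ hPnonneg x⟩
  have hTne : T.Nonempty := ⟨_, 0, 0, rfl⟩
  have hQne : Q.Nonempty := ⟨_, 0, rfl⟩
  have hQT : Q ⊆ T := by
    rintro v ⟨x, rfl⟩
    exact ⟨x, -((a ⬝ᵥ (A *ᵥ x - c)) * S⁻¹) / 2, (hach x).symm⟩
  constructor
  · apply le_antisymm
    · exact csInf_le_csInf hTbdd hQne hQT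
    · refine le_csInf hTne ?_
      rintro v ⟨x, α, rfl⟩
      exact le_trans (csInf_le hQbdd ⟨x, rfl⟩) (hle x α)
  · intro s α₀ hmin x
    calc quadP A a w c s ≤ quadTwo A a w c s α₀ := hle s α₀
      _ ≤ quadTwo A a w c x (-((a ⬝ᵥ (A *ᵥ x - c)) * S⁻¹) / 2) := hmin _ _
      _ = quadP A a w c x := hach x
end

section
/- Let A ∈ ℝ^{m×n}, c ∈ ℝᵐ, and let P be a symmetric matrix with (1−γ)I ⪯ P ⪯ I for some 0 ≤ γ < 1. Let x* minimize ‖Ax − c‖₂ and s* minimize ‖Ax − c‖_P. Then ‖A(s* − x*)‖₂² ≤ (γ/(1−γ)) · ‖Ax* − c‖₂² ≤ (γ/(1−γ)) ‖c‖₂². -/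
/-!
The residual `r = A x* - c` of a least-squares solution is orthogonal to the range of `A`, so
`‖A(s* - x*)‖² = ‖A s* - c‖² - ‖r‖²`. The Loewner bounds on `P` and the minimality of `s*` give
`(1 - γ)‖A s* - c‖² ≤ ‖A s* - c‖²_P ≤ ‖r‖²_P ≤ ‖r‖²`, which bounds the difference by `γ/(1-γ) ‖r‖²`.
Comparing `x*` with `x = 0` gives `‖r‖² ≤ ‖c‖²`.
-/

open Matrix

variable {K : Type*} [Field K] [LinearOrder K] [IsStrictOrderedRing K]
  {ι κ : Type*} [Fintype ι] [Fintype κ]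

theorem leastSquares_residual_dotProduct_mulVec_eq_zero {A : Matrix ι κ K} {c : ι → K}
    {xs : κ → K}
    (hxs : ∀ x, (A *ᵥ xs - c) ⬝ᵥ (A *ᵥ xs - c) ≤ (A *ᵥ x - c) ⬝ᵥ (A *ᵥ x - c)) (v : κ → K) :
    (A *ᵥ xs - c) ⬝ᵥ (A *ᵥ v) = 0 := by
  set r := A *ᵥ xs - c with hr
  set a := r ⬝ᵥ (A *ᵥ v)
  -- Moving `xs` along `v` changes the objective by `2 t a + t² ‖A v‖²`, which must stay `≥ 0`.
  have hquad : ∀ t : K, 0 ≤ (A *ᵥ v) ⬝ᵥ (A *ᵥ v) * (t * t) + 2 * a * t + 0 := by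
    intro t
    have hmove : A *ᵥ (xs + t • v) - c = r + t • (A *ᵥ v) := by
      rw [hr, mulVec_add, mulVec_smul]; abel
    have := hxs (xs + t • v)
    rw [hmove] at this
    simp only [dotProduct_add, add_dotProduct, smul_dotProduct, dotProduct_smul, smul_eq_mul,
      dotProduct_comm (A *ᵥ v) r] at this
    linarith
  have := discrim_le_zero hquad
  rw [discrim] at this
  nlinarith [sq_nonneg a]

theorem leastSquares_mulVec_sub_dotProduct_self {A : Matrix ι κ K} {c : ι → K}
    {xs : κ → K}
    (hxs : ∀ x, (A *ᵥ xs - c) ⬝ᵥ (A *ᵥ xs - c) ≤ (A *ᵥ x - c) ⬝ᵥ (A *ᵥ x - c)) (s : κ → K) :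
    (A *ᵥ (s - xs)) ⬝ᵥ (A *ᵥ (s - xs)) =
      (A *ᵥ s - c) ⬝ᵥ (A *ᵥ s - c) - (A *ᵥ xs - c) ⬝ᵥ (A *ᵥ xs - c) := by
  have hdiff : A *ᵥ (s - xs) = (A *ᵥ s - c) - (A *ᵥ xs - c) := by
    rw [mulVec_sub]; abel
  have horth := leastSquares_residual_dotProduct_mulVec_eq_zero hxs (s - xs)
  rw [hdiff] at horth ⊢
  generalize A *ᵥ s - c = rs, A *ᵥ xs - c = rx at horth ⊢
  simp only [dotProduct_sub, sub_dotProduct, dotProduct_comm rs rx] at horth ⊢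
  linarith

theorem dotProduct_mulVec_le_of_posSemidef_sub {P Q : Matrix ι ι K} [StarRing K]
    [TrivialStar K] (h : (P - Q).PosSemidef) (v : ι → K) :
    v ⬝ᵥ (Q *ᵥ v) ≤ v ⬝ᵥ (P *ᵥ v) := by
  have := h.dotProduct_mulVec_nonneg v
  rw [star_trivial, sub_mulVec, dotProduct_sub] at this
  linarith

theorem stmt13_general {m n : ℕ} (A : Matrix (Fin m) (Fin n) ℝ) (c : Fin m → ℝ)
    (P : Matrix (Fin m) (Fin m) ℝ) (γ : ℝ) (hγ0 : 0 ≤ γ) (hγ1 : γ < 1)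
    (hPlow : (P - (1 - γ) • (1 : Matrix (Fin m) (Fin m) ℝ)).PosSemidef)
    (hPhigh : ((1 : Matrix (Fin m) (Fin m) ℝ) - P).PosSemidef)
    (xs ss : Fin n → ℝ)
    (hxs : ∀ x : Fin n → ℝ,
      (A *ᵥ xs - c) ⬝ᵥ (A *ᵥ xs - c) ≤ (A *ᵥ x - c) ⬝ᵥ (A *ᵥ x - c))
    (hss : ∀ x : Fin n → ℝ,
      (A *ᵥ ss - c) ⬝ᵥ (P *ᵥ (A *ᵥ ss - c)) ≤ (A *ᵥ x - c) ⬝ᵥ (P *ᵥ (A *ᵥ x - c))) :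
    (A *ᵥ (ss - xs)) ⬝ᵥ (A *ᵥ (ss - xs)) ≤
        γ / (1 - γ) * ((A *ᵥ xs - c) ⬝ᵥ (A *ᵥ xs - c)) ∧
      γ / (1 - γ) * ((A *ᵥ xs - c) ⬝ᵥ (A *ᵥ xs - c)) ≤ γ / (1 - γ) * (c ⬝ᵥ c) := by
  have hlow := dotProduct_mulVec_le_of_posSemidef_sub hPlow (A *ᵥ ss - c)
  have hhigh := dotProduct_mulVec_le_of_posSemidef_sub hPhigh (A *ᵥ xs - c)
  rw [smul_mulVec, one_mulVec, dotProduct_smul, smul_eq_mul] at hlow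
  rw [one_mulVec] at hhigh
  have hmin := hss xs
  constructor
  · rw [leastSquares_mulVec_sub_dotProduct_self hxs, div_mul_eq_mul_div,
      le_div_iff₀ (by linarith)]
    linarith
  · refine mul_le_mul_of_nonneg_left ?_ (div_nonneg hγ0 (by linarith))
    simpa using hxs 0

/-- If `(1−γ)I ⪯ P ⪯ I` with `0 ≤ γ < 1`, `x*` minimizes `‖Ax − c‖₂` and `s*` minimizes
`‖Ax − c‖_P`, then `‖A(s* − x*)‖₂² ≤ (γ/(1−γ))‖Ax* − c‖₂² ≤ (γ/(1−γ))‖c‖₂²`. -/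
theorem stmt13 {m n : ℕ} (A : Matrix (Fin m) (Fin n) ℝ) (c : Fin m → ℝ)
    (P : Matrix (Fin m) (Fin m) ℝ) (γ : ℝ) (hγ0 : 0 ≤ γ) (hγ1 : γ < 1)
    (hPsymm : P.IsSymm)
    (hPlow : (P - (1 - γ) • (1 : Matrix (Fin m) (Fin m) ℝ)).PosSemidef)
    (hPhigh : ((1 : Matrix (Fin m) (Fin m) ℝ) - P).PosSemidef)
    (xs ss : Fin n → ℝ)
    (hxs : ∀ x : Fin n → ℝ,
      (A *ᵥ xs - c) ⬝ᵥ (A *ᵥ xs - c) ≤ (A *ᵥ x - c) ⬝ᵥ (A *ᵥ x - c))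
    (hss : ∀ x : Fin n → ℝ,
      (A *ᵥ ss - c) ⬝ᵥ (P *ᵥ (A *ᵥ ss - c)) ≤ (A *ᵥ x - c) ⬝ᵥ (P *ᵥ (A *ᵥ x - c))) :
    (A *ᵥ (ss - xs)) ⬝ᵥ (A *ᵥ (ss - xs)) ≤
        γ / (1 - γ) * ((A *ᵥ xs - c) ⬝ᵥ (A *ᵥ xs - c)) ∧
      γ / (1 - γ) * ((A *ᵥ xs - c) ⬝ᵥ (A *ᵥ xs - c)) ≤ γ / (1 - γ) * (c ⬝ᵥ c) :=
  stmt13_general A c P γ hγ0 hγ1 hPlow hPhigh xs ss hxs hss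
end

section
/- Let B ∈ ℝ^{m×n}, c ∈ ℝᵐ, and let B' = [B; δ B̃] be B with additional rows δ B̃ appended, with right-hand side c' = (c; 0). Let x_B minimize ‖Bx − c‖₂ with x_B ⊥ null(B), and let x' minimize ‖B'x − c'‖₂. Then ‖x_B − x'‖_{BᵀB} ≤ δ ‖B̃ x_B‖₂. -/
open Matrix

lemma dp_self_nonneg {p : Type*} [Fintype p] (v : p → ℝ) : 0 ≤ v ⬝ᵥ v :=
  Finset.sum_nonneg fun _ _ => mul_self_nonneg _

lemma normal_eq {p n : Type*} [Fintype p] [Fintype n] [DecidableEq n]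
    (M : Matrix p n ℝ) (d : p → ℝ) (x : n → ℝ)
    (hx : ∀ y : n → ℝ, (M *ᵥ x - d) ⬝ᵥ (M *ᵥ x - d) ≤ (M *ᵥ y - d) ⬝ᵥ (M *ᵥ y - d))
    (v : n → ℝ) : (M *ᵥ x - d) ⬝ᵥ (M *ᵥ v) = 0 := by
  set r := M *ᵥ x - d with hr
  set w := M *ᵥ v with hw
  set g := r ⬝ᵥ w with hg
  set a := w ⬝ᵥ w with ha
  have ha0 : 0 ≤ a := dp_self_nonneg w
  set t : ℝ := g / (a + 1) with ht
  have h := hx (x - t • v)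
  have hexp : M *ᵥ (x - t • v) - d = r - t • w := by
    rw [mulVec_sub, mulVec_smul, hr]; abel
  rw [hexp] at h
  have h2 : (r - t • w) ⬝ᵥ (r - t • w)
      = r ⬝ᵥ r - 2 * t * g + t ^ 2 * a := by
    simp only [dotProduct_sub, sub_dotProduct, dotProduct_smul, smul_dotProduct,
      smul_eq_mul, hg, ha]
    rw [dotProduct_comm w r]
    ring
  rw [h2] at h
  have h3 : 0 ≤ t ^ 2 * a - 2 * t * g := by linarith
  have hne : a + 1 ≠ 0 := by positivity
  rw [ht] at h3
  have h4 : 0 ≤ (g ^ 2 * a - 2 * g ^ 2 * (a + 1)) / (a + 1) ^ 2 := by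
    have : (g / (a + 1)) ^ 2 * a - 2 * (g / (a + 1)) * g
        = (g ^ 2 * a - 2 * g ^ 2 * (a + 1)) / (a + 1) ^ 2 := by
      field_simp
    linarith [this ▸ h3]
  have h5 : 0 ≤ g ^ 2 * a - 2 * g ^ 2 * (a + 1) := by
    have := mul_nonneg h4 (sq_nonneg (a + 1))
    rwa [div_mul_cancel₀ _ (pow_ne_zero 2 hne)] at this
  nlinarith [sq_nonneg g]

/-- If `x_B` minimizes `‖Bx − c‖₂` with `x_B ⊥ null(B)`, and `x'` minimizes
`‖B'x − c'‖₂` where `B' = [B; δB̃]` and `c' = (c; 0)`, then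
`‖x_B − x'‖_{BᵀB} ≤ δ ‖B̃ x_B‖₂`. -/
theorem stmt14 {m k n : ℕ} (B : Matrix (Fin m) (Fin n) ℝ)
    (Bt : Matrix (Fin k) (Fin n) ℝ) (δ : ℝ) (hδ : 0 < δ) (c : Fin m → ℝ)
    (xB x' : Fin n → ℝ)
    (hxB : ∀ x : Fin n → ℝ,
      (B *ᵥ xB - c) ⬝ᵥ (B *ᵥ xB - c) ≤ (B *ᵥ x - c) ⬝ᵥ (B *ᵥ x - c))
    (hperp : ∀ z : Fin n → ℝ, B *ᵥ z = 0 → xB ⬝ᵥ z = 0)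
    (hx' : ∀ x : Fin n → ℝ,
      (Matrix.fromRows B (δ • Bt) *ᵥ x' - Sum.elim c 0) ⬝ᵥ
          (Matrix.fromRows B (δ • Bt) *ᵥ x' - Sum.elim c 0) ≤
        (Matrix.fromRows B (δ • Bt) *ᵥ x - Sum.elim c 0) ⬝ᵥ
          (Matrix.fromRows B (δ • Bt) *ᵥ x - Sum.elim c 0)) :
    Real.sqrt ((B *ᵥ (xB - x')) ⬝ᵥ (B *ᵥ (xB - x'))) ≤
      δ * Real.sqrt ((Bt *ᵥ xB) ⬝ᵥ (Bt *ᵥ xB)) := by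
  set e : Fin n → ℝ := xB - x' with he
  have A1 : (B *ᵥ xB - c) ⬝ᵥ (B *ᵥ e) = 0 := normal_eq B c xB hxB e
  have A2 : (Matrix.fromRows B (δ • Bt) *ᵥ x' - Sum.elim c 0) ⬝ᵥ
      (Matrix.fromRows B (δ • Bt) *ᵥ e) = 0 := normal_eq _ _ x' hx' e
  -- decompose A2
  have hsplit : ∀ y : Fin n → ℝ, Matrix.fromRows B (δ • Bt) *ᵥ y
      = Sum.elim (B *ᵥ y) (δ • (Bt *ᵥ y)) := by
    intro y
    rw [fromRows_mulVec, smul_mulVec]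
  have A2' : (B *ᵥ x' - c) ⬝ᵥ (B *ᵥ e) + δ ^ 2 * ((Bt *ᵥ x') ⬝ᵥ (Bt *ᵥ e)) = 0 := by
    have : (Sum.elim (B *ᵥ x') (δ • (Bt *ᵥ x')) - Sum.elim c 0) ⬝ᵥ
        Sum.elim (B *ᵥ e) (δ • (Bt *ᵥ e)) = 0 := by
      rw [← hsplit, ← hsplit]; exact A2
    have hsub : Sum.elim (B *ᵥ x') (δ • (Bt *ᵥ x')) - Sum.elim c (0 : Fin k → ℝ)
        = Sum.elim (B *ᵥ x' - c) (δ • (Bt *ᵥ x')) := by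
      ext (i | i) <;> simp
    rw [hsub, sumElim_dotProduct_sumElim, smul_dotProduct, dotProduct_smul,
      smul_eq_mul, smul_eq_mul] at this
    nlinarith [this]
  set u := B *ᵥ e with hu
  set a := Bt *ᵥ e with haa
  set b := Bt *ᵥ xB with hb
  have hx'e : B *ᵥ x' - c = (B *ᵥ xB - c) - u := by
    rw [hu, he, mulVec_sub]; abel
  have ha' : Bt *ᵥ x' = b - a := by rw [hb, haa, he, mulVec_sub]; abel
  have key : u ⬝ᵥ u = δ ^ 2 * ((b - a) ⬝ᵥ a) := by
    rw [hx'e, sub_dotProduct, A1, ha'] at A2'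
    linarith
  have hsq : u ⬝ᵥ u ≤ δ ^ 2 * (b ⬝ᵥ b) := by
    have hab : 0 ≤ (a - b) ⬝ᵥ (a - b) := dp_self_nonneg _
    have ha0 : 0 ≤ a ⬝ᵥ a := dp_self_nonneg a
    have hexp1 : (a - b) ⬝ᵥ (a - b) = a ⬝ᵥ a - 2 * (a ⬝ᵥ b) + b ⬝ᵥ b := by
      simp only [dotProduct_sub, sub_dotProduct]
      rw [dotProduct_comm b a]; ring
    have hexp2 : (b - a) ⬝ᵥ a = a ⬝ᵥ b - a ⬝ᵥ a := by
      rw [sub_dotProduct, dotProduct_comm b a]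
    have h1 : 0 ≤ δ ^ 2 * (a ⬝ᵥ a - 2 * (a ⬝ᵥ b) + b ⬝ᵥ b) := by
      have := mul_nonneg (sq_nonneg δ) hab
      rw [hexp1] at this; linarith
    have h2 : 0 ≤ δ ^ 2 * (a ⬝ᵥ a) := mul_nonneg (sq_nonneg δ) ha0
    have h3 : 0 ≤ δ ^ 2 * (b ⬝ᵥ b) := mul_nonneg (sq_nonneg δ) (dp_self_nonneg b)
    rw [key, hexp2]
    nlinarith [h1, h2, h3]
  calc Real.sqrt (u ⬝ᵥ u) ≤ Real.sqrt (δ ^ 2 * (b ⬝ᵥ b)) := Real.sqrt_le_sqrt hsq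
    _ = δ * Real.sqrt (b ⬝ᵥ b) := by
        rw [Real.sqrt_mul (sq_nonneg δ), Real.sqrt_sq hδ.le]
end

section
/- Let M and M̂ be symmetric PSD matrices with the same null space satisfying α M ⪯ M̂ ⪯ β M for some 0 < α ≤ β. Let b be a vector in the common image, and set x* = M† b, y* = M̂† b. Then ‖y* − x*‖_M ≤ max(|α⁻¹ − 1|, |β⁻¹ − 1|) · ‖b‖_{M†}. -/
open Matrix

/-- `N` is the Moore–Penrose pseudo-inverse of `M` (Penrose conditions). -/
def IsMoorePenrose {k : ℕ} (M N : Matrix (Fin k) (Fin k) ℝ) : Prop :=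
  M * N * M = M ∧ N * M * N = N ∧ (M * N)ᵀ = M * N ∧ (N * M)ᵀ = N * M

/-!
Both `x = M† b` and `y = M̂† b` solve their systems: `M x = b = M̂ y`, the second because `M` and
`M̂` have the same image. For `u = β y - x` one has `M u = (βM - M̂) y`, and Cauchy–Schwarz for the
semidefinite form of `βM - M̂ ⪯ (β - α) M` gives `⟨β y - x, x - α y⟩_M ≥ 0`. So `y - x` lies in the
`M`-ball whose diameter joins `(β⁻¹ - 1) x` and `(α⁻¹ - 1) x`, whence
`‖y - x‖_M ≤ max(|α⁻¹ - 1|, |β⁻¹ - 1|) ‖x‖_M`; finally `‖x‖_M² = bᵀ M† b`.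
-/

namespace Matrix

variable {n R : Type*} [Fintype n]

theorem IsSymm.dotProduct_mulVec_comm [CommSemiring R] {A : Matrix n n R} (hA : A.IsSymm)
    (v w : n → R) : v ⬝ᵥ A *ᵥ w = w ⬝ᵥ A *ᵥ v := by
  rw [dotProduct_mulVec, dotProduct_comm, ← mulVec_transpose, hA.eq]

variable [CommRing R] [LinearOrder R] [IsStrictOrderedRing R] [StarRing R] [TrivialStar R]

theorem PosSemidef.dotProduct_mulVec_sq_le {Q : Matrix n n R} (hQ : Q.PosSemidef)
    (x y : n → R) : (x ⬝ᵥ Q *ᵥ y) ^ 2 ≤ (x ⬝ᵥ Q *ᵥ x) * (y ⬝ᵥ Q *ᵥ y) := by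
  classical
  have hsymm : Q.IsSymm := isHermitian_iff_isSymm.mp hQ.isHermitian
  have := (toBilin' Q).apply_mul_apply_le_of_forall_zero_le
    (fun v => by simpa [toBilin'_apply'] using hQ.dotProduct_mulVec_nonneg v) x y
  simpa only [toBilin'_apply', hsymm.dotProduct_mulVec_comm y x, ← sq] using this

theorem PosSemidef.dotProduct_mulVec_le_mul_of_le {Q : Matrix n n R} (hQ : Q.PosSemidef)
    {r : R} (hr : 0 ≤ r) {u y : n → R} (h : u ⬝ᵥ Q *ᵥ u ≤ r * (u ⬝ᵥ Q *ᵥ y)) :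
    u ⬝ᵥ Q *ᵥ y ≤ r * (y ⬝ᵥ Q *ᵥ y) := by
  have hy : 0 ≤ y ⬝ᵥ Q *ᵥ y := by simpa using hQ.dotProduct_mulVec_nonneg y
  rcases le_or_gt (u ⬝ᵥ Q *ᵥ y) 0 with huy | huy
  · exact huy.trans (mul_nonneg hr hy)
  · have := (hQ.dotProduct_mulVec_sq_le u y).trans (mul_le_mul_of_nonneg_right h hy)
    nlinarith

theorem dotProduct_mulVec_nonneg_of_mulVec_eq {M Mh : Matrix n n R} (hM : M.IsSymm)
    {α β : R} (hαβ : α ≤ β) (hlow : (Mh - α • M).PosSemidef)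
    (hhigh : (β • M - Mh).PosSemidef) {x y : n → R} (hxy : M *ᵥ x = Mh *ᵥ y) :
    0 ≤ (β • y - x) ⬝ᵥ M *ᵥ (x - α • y) := by
  set u := β • y - x
  set Q := β • M - Mh
  have hMu : M *ᵥ u = Q *ᵥ y := by
    simp only [u, Q, mulVec_sub, sub_mulVec, mulVec_smul, smul_mulVec, hxy]
  have hx : x - α • y = (β - α) • y - u := by simp only [u]; module
  have hQu : u ⬝ᵥ Q *ᵥ u ≤ (β - α) * (u ⬝ᵥ Q *ᵥ y) := by
    have hP := hlow.dotProduct_mulVec_nonneg u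
    have hQ : Q = (β - α) • M - (Mh - α • M) := by simp only [Q]; module
    rw [← hMu, hQ]
    simp only [star_trivial, sub_mulVec, smul_mulVec, dotProduct_sub, dotProduct_smul,
      smul_eq_mul] at hP ⊢
    linarith
  have key := hhigh.dotProduct_mulVec_le_mul_of_le (sub_nonneg.mpr hαβ) hQu
  rw [hx, mulVec_sub, mulVec_smul, dotProduct_sub, dotProduct_smul, smul_eq_mul,
    hM.dotProduct_mulVec_comm u y, hMu]
  rw [← hMu] at key ⊢
  linarith

end Matrix

theorem le_max_abs_mul_of_sq_le {R : Type*} [CommRing R] [LinearOrder R] [IsStrictOrderedRing R]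
    {a c E X t : R} (hX : 0 ≤ X) (ht : |t| ≤ E * X) (hca : c ≤ a)
    (h : E ^ 2 ≤ (a + c) * t - a * c * X ^ 2) : E ≤ max |a| |c| * X := by
  rcases le_total 0 (a + c) with hac | hac
  · have hprod : (E - a * X) * (E - c * X) ≤ 0 := by
      nlinarith [mul_le_mul_of_nonneg_left ((le_abs_self t).trans ht) hac]
    have : E ≤ a * X := by
      by_contra! hlt
      nlinarith [mul_le_mul_of_nonneg_right hca hX]
    exact this.trans (mul_le_mul_of_nonneg_right ((le_abs_self a).trans (le_max_left _ _)) hX)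
  · have hprod : (E + a * X) * (E + c * X) ≤ 0 := by
      nlinarith [mul_le_mul_of_nonpos_left ((neg_abs_le t).trans' (neg_le_neg ht)) hac]
    have : E ≤ -c * X := by
      by_contra! hlt
      nlinarith [mul_le_mul_of_nonneg_right hca hX]
    exact this.trans (mul_le_mul_of_nonneg_right ((neg_le_abs c).trans (le_max_right _ _)) hX)

namespace Matrix

variable {n : Type*} [Fintype n]

theorem PosSemidef.sqrt_dotProduct_mulVec_le {M : Matrix n n ℝ} (hM : M.PosSemidef)
    {a c : ℝ} (hca : c ≤ a) {e x : n → ℝ} (h : 0 ≤ (e - c • x) ⬝ᵥ M *ᵥ (a • x - e)) :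
    √(e ⬝ᵥ M *ᵥ e) ≤ max |a| |c| * √(x ⬝ᵥ M *ᵥ x) := by
  have hsymm : M.IsSymm := isHermitian_iff_isSymm.mp hM.isHermitian
  have hx : 0 ≤ x ⬝ᵥ M *ᵥ x := by simpa using hM.dotProduct_mulVec_nonneg x
  have he : 0 ≤ e ⬝ᵥ M *ᵥ e := by simpa using hM.dotProduct_mulVec_nonneg e
  refine le_max_abs_mul_of_sq_le (Real.sqrt_nonneg _) (t := e ⬝ᵥ M *ᵥ x) ?_ hca ?_
  · rw [← Real.sqrt_mul he]
    exact Real.abs_le_sqrt (hM.dotProduct_mulVec_sq_le e x)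
  · rw [Real.sq_sqrt he, Real.sq_sqrt hx]
    simp only [mulVec_sub, mulVec_smul, dotProduct_sub, sub_dotProduct, dotProduct_smul,
      smul_dotProduct, smul_eq_mul, hsymm.dotProduct_mulVec_comm x e] at h
    linarith

theorem PosSemidef.sqrt_dotProduct_mulVec_sub_le_of_mulVec_eq {M Mh : Matrix n n ℝ}
    (hM : M.PosSemidef) {α β : ℝ} (hα : 0 < α) (hαβ : α ≤ β)
    (hlow : (Mh - α • M).PosSemidef) (hhigh : (β • M - Mh).PosSemidef) {x y : n → ℝ}
    (hxy : M *ᵥ x = Mh *ᵥ y) :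
    √((y - x) ⬝ᵥ M *ᵥ (y - x)) ≤ max |α⁻¹ - 1| |β⁻¹ - 1| * √(x ⬝ᵥ M *ᵥ x) := by
  have hβ : 0 < β := hα.trans_le hαβ
  refine hM.sqrt_dotProduct_mulVec_le (sub_le_sub_right (inv_anti₀ hα hαβ) 1) ?_
  have hleft : y - x - (β⁻¹ - 1) • x = β⁻¹ • (β • y - x) := by
    rw [smul_sub, smul_smul, inv_mul_cancel₀ hβ.ne', one_smul]; module
  have hright : (α⁻¹ - 1) • x - (y - x) = α⁻¹ • (x - α • y) := by
    rw [smul_sub, smul_smul, inv_mul_cancel₀ hα.ne', one_smul]; module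
  rw [hleft, hright, mulVec_smul, dotProduct_smul, smul_dotProduct, smul_eq_mul, smul_eq_mul]
  have := dotProduct_mulVec_nonneg_of_mulVec_eq (isHermitian_iff_isSymm.mp hM.isHermitian)
    hαβ hlow hhigh hxy
  positivity

end Matrix

theorem IsMoorePenrose.mul_mul_eq_of_ker_subset {k : ℕ} {A G B : Matrix (Fin k) (Fin k) ℝ}
    (hG : IsMoorePenrose A G) (hA : A.IsSymm) (hB : B.IsSymm)
    (hker : ∀ v, A *ᵥ v = 0 → B *ᵥ v = 0) : A * G * B = B := by
  obtain ⟨hAGA, -, hAG, -⟩ := hG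
  have hA_proj : A * (1 - A * G) = 0 := by
    have : A * (A * G) = A := by
      calc A * (A * G) = A * (A * G)ᵀ := by rw [hAG]
        _ = (A * G * A)ᵀ := by simp only [transpose_mul, hA.eq, Matrix.mul_assoc]
        _ = A := by rw [hAGA, hA.eq]
    rw [Matrix.mul_sub, Matrix.mul_one, this, sub_self]
  have hB_proj : B * (1 - A * G) = 0 := ext_iff_mulVec.mpr fun v => by
    rw [← mulVec_mulVec, hker _ (by rw [mulVec_mulVec, hA_proj, zero_mulVec]), zero_mulVec]
  have : (1 - A * G) * B = 0 := by
    rw [← hB.eq, ← hAG, ← transpose_one, ← transpose_sub, ← transpose_mul, hB_proj,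
      transpose_zero]
  rwa [Matrix.sub_mul, Matrix.one_mul, sub_eq_zero, eq_comm] at this

/-- If `M, M̂` are symmetric PSD with the same null space, `αM ⪯ M̂ ⪯ βM` with
`0 < α ≤ β`, `b ∈ im(M)`, `x* = M† b` and `y* = M̂† b`, then
`‖y* − x*‖_M ≤ max(|α⁻¹ − 1|, |β⁻¹ − 1|) ‖b‖_{M†}`. -/
theorem stmt15 {n : ℕ} (M Mh N Nh : Matrix (Fin n) (Fin n) ℝ)
    (hM : M.PosSemidef) (hMh : Mh.PosSemidef)
    (hnull : {x : Fin n → ℝ | M *ᵥ x = 0} = {x : Fin n → ℝ | Mh *ᵥ x = 0})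
    (α β : ℝ) (hα : 0 < α) (hαβ : α ≤ β)
    (hlow : (Mh - α • M).PosSemidef) (hhigh : (β • M - Mh).PosSemidef)
    (hN : IsMoorePenrose M N) (hNh : IsMoorePenrose Mh Nh)
    (b : Fin n → ℝ) (hb : ∃ u : Fin n → ℝ, M *ᵥ u = b) :
    Real.sqrt ((Nh *ᵥ b - N *ᵥ b) ⬝ᵥ (M *ᵥ (Nh *ᵥ b - N *ᵥ b))) ≤
      max |α⁻¹ - 1| |β⁻¹ - 1| * Real.sqrt (b ⬝ᵥ (N *ᵥ b)) := by
  obtain ⟨u, rfl⟩ := hb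
  set b := M *ᵥ u
  set x := N *ᵥ b
  set y := Nh *ᵥ b
  have hx : M *ᵥ x = b := by simp only [x, b, mulVec_mulVec, ← Matrix.mul_assoc, hN.1]
  have hy : Mh *ᵥ y = b := by
    simp only [y, b, mulVec_mulVec, ← Matrix.mul_assoc, hNh.mul_mul_eq_of_ker_subset
      (isHermitian_iff_isSymm.mp hMh.isHermitian) (isHermitian_iff_isSymm.mp hM.isHermitian)
      fun v hv => (Set.ext_iff.mp hnull v).mpr hv]
  have hb_norm : b ⬝ᵥ x = x ⬝ᵥ M *ᵥ x := by
    rw [← hx, dotProduct_comm]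
  rw [hb_norm]
  exact hM.sqrt_dotProduct_mulVec_sub_le_of_mulVec_eq hα hαβ hlow hhigh (hx.trans hy.symm)
end

section
/- Let W and Ŵ be diagonal matrices with positive diagonal entries such that W_{ii} ≥ 1 for all i, and Ŵ_{ii} = (2^{−k} ⌈W_{ii}^{1/2} · 2^k⌉)² for some integer k ≥ 0. Then for any matrix B, BᵀWB ⪯ BᵀŴB ⪯ (1 + 2^{−k+2}) BᵀWB. In particular, λ_max(BᵀŴB) ≤ (1 + 2^{−k+2}) λ_max(BᵀWB) and λ_min⁺(BᵀŴB) ≥ λ_min⁺(BᵀWB). -/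
open Matrix

/-!
Rounding `√w` up to a multiple of `ε = 2⁻ᵏ` gives `√w ≤ √ŵ ≤ √w + ε`, hence `w ≤ ŵ ≤ (1 + 4ε) w`
because `w ≥ 1`. An entrywise inequality of diagonal weights becomes a Loewner inequality after
conjugating by `B`, and the spectral bounds follow from the Rayleigh-quotient descriptions of
`λ_max` and `λ_min⁺`, since both matrices have kernel `ker B`.
-/

/-- The largest eigenvalue of a symmetric matrix, as the supremum of the Rayleigh quotient
over unit vectors. -/
noncomputable def lmax {k : Type*} [Fintype k] (M : Matrix k k ℝ) : ℝ :=
  ⨆ x : {x : k → ℝ // x ⬝ᵥ x = 1}, (x : k → ℝ) ⬝ᵥ (M *ᵥ (x : k → ℝ))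

section Rounding

variable {x N : ℝ}

lemma le_inv_mul_ceil_mul (hN : 0 < N) : x ≤ N⁻¹ * ⌈x * N⌉ := by
  rw [inv_mul_eq_div, le_div_iff₀ hN]
  exact Int.le_ceil _

lemma inv_mul_ceil_mul_le (hN : 0 < N) : N⁻¹ * ⌈x * N⌉ ≤ x + N⁻¹ := by
  calc N⁻¹ * ⌈x * N⌉ ≤ N⁻¹ * (x * N + 1) := by gcongr; exact (Int.ceil_lt_add_one _).le
    _ = x + N⁻¹ := by field_simp

lemma sq_inv_mul_ceil_mul_le (hx : 1 ≤ x) (hN : 1 ≤ N) :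
    (N⁻¹ * ⌈x * N⌉) ^ 2 ≤ (1 + 4 * N⁻¹) * x ^ 2 := by
  have hN0 : 0 < N := by linarith
  have hε : N⁻¹ ≤ 1 := inv_le_one_of_one_le₀ hN
  have hε0 : 0 < N⁻¹ := inv_pos.mpr hN0
  calc (N⁻¹ * ⌈x * N⌉) ^ 2 ≤ (x + N⁻¹) ^ 2 :=
        pow_le_pow_left₀ (by linarith [le_inv_mul_ceil_mul (x := x) hN0])
          (inv_mul_ceil_mul_le hN0) 2
    _ ≤ (1 + 4 * N⁻¹) * x ^ 2 := by
        nlinarith [mul_nonneg hε0.le (mul_nonneg (by linarith : (0 : ℝ) ≤ x) (sub_nonneg.mpr hx)),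
          mul_nonneg hε0.le (sub_nonneg.mpr hε),
          mul_nonneg hε0.le (by nlinarith : (0 : ℝ) ≤ x ^ 2 - 1)]

end Rounding

section Loewner

variable {m n : Type*} [Fintype m] [Fintype n]

lemma dotProduct_mulVec_le_of_posSemidef_sub_s16 {M N : Matrix n n ℝ} (h : (N - M).PosSemidef)
    (x : n → ℝ) : x ⬝ᵥ M *ᵥ x ≤ x ⬝ᵥ N *ᵥ x := by
  have := h.dotProduct_mulVec_nonneg x
  rw [star_trivial, sub_mulVec, dotProduct_sub] at this
  linarith

variable [DecidableEq m]

lemma posSemidef_transpose_mul_diagonal_mul_sub {a b : m → ℝ} (hab : ∀ i, a i ≤ b i)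
    (B : Matrix m n ℝ) :
    (Bᵀ * diagonal b * B - Bᵀ * diagonal a * B).PosSemidef := by
  rw [← Matrix.sub_mul, ← Matrix.mul_sub, diagonal_sub, ← conjTranspose_eq_transpose_of_trivial]
  exact (posSemidef_diagonal_iff.mpr fun i => sub_nonneg.mpr (hab i)).conjTranspose_mul_mul_same B

lemma transpose_mul_diagonal_mul_mulVec_eq_zero_iff {d : m → ℝ} (hd : ∀ i, 0 < d i)
    (B : Matrix m n ℝ) (y : n → ℝ) : (Bᵀ * diagonal d * B) *ᵥ y = 0 ↔ B *ᵥ y = 0 := by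
  have hD : (diagonal d).PosDef := posDef_diagonal_iff.mpr hd
  have hBDB := hD.posSemidef.conjTranspose_mul_mul_same B
  rw [conjTranspose_eq_transpose_of_trivial] at hBDB
  rw [← hBDB.dotProduct_mulVec_zero_iff, star_trivial, ← mulVec_mulVec, ← mulVec_mulVec,
    dotProduct_mulVec, vecMul_transpose]
  refine ⟨fun h => ?_, fun h => by simp [h]⟩
  by_contra hy
  exact (hD.dotProduct_mulVec_pos hy).ne' (by rwa [star_trivial])

end Loewner

section Rayleigh

variable {n : Type*} [Fintype n]

lemma abs_apply_le_one_of_dotProduct_self_eq_one {x : n → ℝ} (hx : x ⬝ᵥ x = 1) (i : n) :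
    |x i| ≤ 1 := by
  rw [← sq_le_one_iff_abs_le_one, sq, ← hx]
  exact Finset.single_le_sum (f := fun j => x j * x j) (fun j _ => mul_self_nonneg _)
    (Finset.mem_univ i)

lemma bddAbove_range_dotProduct_mulVec (M : Matrix n n ℝ) :
    BddAbove (Set.range fun x : {x : n → ℝ // x ⬝ᵥ x = 1} => (x : n → ℝ) ⬝ᵥ M *ᵥ x) := by
  refine ⟨∑ i, ∑ j, |M i j|, ?_⟩
  rintro _ ⟨⟨x, hx⟩, rfl⟩
  have h1 := abs_apply_le_one_of_dotProduct_self_eq_one hx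
  simp only [dotProduct, mulVec, Finset.mul_sum]
  refine Finset.sum_le_sum fun i _ => Finset.sum_le_sum fun j _ => ?_
  calc x i * (M i j * x j) ≤ |x i| * (|M i j| * |x j|) := by
        rw [← abs_mul, ← abs_mul]; exact le_abs_self _
    _ ≤ 1 * (|M i j| * 1) := by gcongr <;> simp [h1]
    _ = |M i j| := by ring

lemma lmax_mono {M N : Matrix n n ℝ} (h : (N - M).PosSemidef) : lmax M ≤ lmax N :=
  ciSup_mono (bddAbove_range_dotProduct_mulVec N) fun x =>
    dotProduct_mulVec_le_of_posSemidef_sub_s16 h x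

lemma lmax_smul {c : ℝ} (hc : 0 ≤ c) (M : Matrix n n ℝ) : lmax (c • M) = c * lmax M := by
  simp only [lmax, smul_mulVec, dotProduct_smul, smul_eq_mul, Real.mul_iSup_of_nonneg hc]

lemma lminPos_mono {M N : Matrix n n ℝ} (hM : M.PosSemidef) (h : (N - M).PosSemidef)
    (hker : ∀ y, M *ᵥ y = 0 ↔ N *ᵥ y = 0) : lminPos M ≤ lminPos N := by
  simp only [lminPos, ← hker]
  by_cases hne : ∃ x : n → ℝ, x ⬝ᵥ x = 1 ∧ ∀ y, M *ᵥ y = 0 → x ⬝ᵥ y = 0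
  · obtain ⟨x₀, hx₀⟩ := hne
    refine le_csInf ⟨_, x₀, hx₀.1, hx₀.2, rfl⟩ ?_
    rintro _ ⟨x, hx, hxM, rfl⟩
    have hbdd : BddBelow {r : ℝ | ∃ x : n → ℝ, x ⬝ᵥ x = 1 ∧ (∀ y, M *ᵥ y = 0 → x ⬝ᵥ y = 0) ∧
        r = x ⬝ᵥ M *ᵥ x} := by
      refine ⟨0, ?_⟩
      rintro _ ⟨x, -, -, rfl⟩
      simpa using hM.dotProduct_mulVec_nonneg x
    exact (csInf_le hbdd ⟨x, hx, hxM, rfl⟩).trans (dotProduct_mulVec_le_of_posSemidef_sub_s16 h x)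
  · push Not at hne
    have hempty : ∀ K : Matrix n n ℝ, {r : ℝ | ∃ x : n → ℝ, x ⬝ᵥ x = 1 ∧
        (∀ y, M *ᵥ y = 0 → x ⬝ᵥ y = 0) ∧ r = x ⬝ᵥ K *ᵥ x} = ∅ := by
      intro K
      ext r
      simp only [Set.mem_ofPred_eq, Set.mem_empty_iff_false, iff_false]
      rintro ⟨x, hx, hxM, -⟩
      exact absurd hxM (by simpa using hne x hx)
    rw [hempty, hempty]

end Rayleigh

/-- Rounding weights: if `W = diag(w)` with `w_i ≥ 1` and
`Ŵ_{ii} = (2^{−k} ⌈√(w_i) 2^k⌉)²`, then for every matrix `B`: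
`BᵀWB ⪯ BᵀŴB ⪯ (1 + 2^{−k+2}) BᵀWB`; in particular
`λ_max(BᵀŴB) ≤ (1 + 2^{−k+2}) λ_max(BᵀWB)` and `λ_min⁺(BᵀŴB) ≥ λ_min⁺(BᵀWB)`. -/
theorem stmt16 {n p : ℕ} (k : ℕ) (w : Fin n → ℝ) (hw : ∀ i, 1 ≤ w i)
    (B : Matrix (Fin n) (Fin p) ℝ)
    (W Wh : Matrix (Fin n) (Fin n) ℝ)
    (hW : W = Matrix.diagonal w)
    (hWh : Wh = Matrix.diagonal fun i =>
      (((2 : ℝ) ^ k)⁻¹ * ((⌈Real.sqrt (w i) * 2 ^ k⌉ : ℤ) : ℝ)) ^ 2) :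
    (Bᵀ * Wh * B - Bᵀ * W * B).PosSemidef ∧
      ((1 + (2 : ℝ) ^ (2 - (k : ℤ))) • (Bᵀ * W * B) - Bᵀ * Wh * B).PosSemidef ∧
      lmax (Bᵀ * Wh * B) ≤ (1 + (2 : ℝ) ^ (2 - (k : ℤ))) * lmax (Bᵀ * W * B) ∧
      lminPos (Bᵀ * W * B) ≤ lminPos (Bᵀ * Wh * B) := by
  subst hW hWh
  set N : ℝ := 2 ^ k
  have hN : 1 ≤ N := one_le_pow₀ one_le_two
  have hc : (2 : ℝ) ^ (2 - (k : ℤ)) = 4 * N⁻¹ := by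
    rw [zpow_sub₀ two_ne_zero, zpow_natCast, div_eq_mul_inv]; norm_num [N]
  rw [hc]
  have hsq : ∀ i, √(w i) ^ 2 = w i := fun i => Real.sq_sqrt (zero_le_one.trans (hw i))
  have hlow : ∀ i, w i ≤ (N⁻¹ * ⌈√(w i) * N⌉) ^ 2 := fun i =>
    (hsq i).symm.trans_le <|
      pow_le_pow_left₀ (Real.sqrt_nonneg _) (le_inv_mul_ceil_mul (by positivity)) 2
  have hupp : ∀ i, (N⁻¹ * ⌈√(w i) * N⌉) ^ 2 ≤ ((1 + 4 * N⁻¹) • w) i := fun i =>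
    (sq_inv_mul_ceil_mul_le (Real.one_le_sqrt.mpr (hw i)) hN).trans_eq (by rw [hsq i]; rfl)
  have hker : ∀ y, (Bᵀ * diagonal w * B) *ᵥ y = 0 ↔
      (Bᵀ * diagonal (fun i => (N⁻¹ * ⌈√(w i) * N⌉) ^ 2) * B) *ᵥ y = 0 := fun y => by
    rw [transpose_mul_diagonal_mul_mulVec_eq_zero_iff (fun i => zero_lt_one.trans_le (hw i)),
      transpose_mul_diagonal_mul_mulVec_eq_zero_iff
        (fun i => zero_lt_one.trans_le ((hw i).trans (hlow i)))]
  have hlower := posSemidef_transpose_mul_diagonal_mul_sub hlow B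
  have hupper : ((1 + 4 * N⁻¹) • (Bᵀ * diagonal w * B) -
      Bᵀ * diagonal (fun i => (N⁻¹ * ⌈√(w i) * N⌉) ^ 2) * B).PosSemidef := by
    rw [← Matrix.smul_mul, ← Matrix.mul_smul, ← diagonal_smul]
    exact posSemidef_transpose_mul_diagonal_mul_sub hupp B
  refine ⟨hlower, hupper, ?_, lminPos_mono ?_ hlower hker⟩
  · rw [← lmax_smul (by positivity)]
    exact lmax_mono hupper
  · simpa using posSemidef_transpose_mul_diagonal_mul_sub (fun i => zero_le_one.trans (hw i)) B
end

section
/- Let y be uniformly distributed on the sphere of radius R in ℝⁿ centered at the origin, and let ỹ be obtained from y by rounding each coordinate to a multiple of δ (so ‖ỹ − y‖_∞ ≤ δ). Then for any fixed nonzero vector a ∈ ℝⁿ with entries in [−2, 2] and aᵀ𝟙 = 0, the probability that aᵀ ỹ = 0 is at most 2δn²/(‖a‖₂ R). -/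
/-!
By rotation invariance, the `μ`-measure of the band `{y | |⟪u, y⟫| ≤ s‖u‖}` is the same for
every `u ≠ 0`. Averaging it over `u` in the unit ball `B` and exchanging the integrals, it
becomes the `μ`-average over `y` (with `‖y‖ = R`) of the volume of the slab
`{u ∈ B | |⟪y/R, u⟫| ≤ s/R}`. Splitting off the direction `y/R`, the slab lies in a cylinder
of volume `(2s/R) vol(Bⁿ⁻¹)`, and `vol(Bⁿ⁻¹) ≤ n vol(Bⁿ)` by log-convexity of `Γ`; so the band
has measure at most `2sn/R`. Rounding moves `Σ aᵢ yᵢ` by at most `nδ`, so `aᵀỹ = 0` forces `y`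
into the band for `u = a`, `s‖a‖ = nδ`.
-/

open MeasureTheory Real Module Metric RealInnerProductSpace

theorem Real.Gamma_add_half_le {s : ℝ} (hs : 0 < s) : Gamma (s + 1 / 2) ≤ √s * Gamma s := by
  have hΓ := Gamma_pos_of_pos hs
  have h := Gamma_mul_add_mul_le_rpow_Gamma_mul_rpow_Gamma hs (by linarith : 0 < s + 1)
    (by norm_num : (0:ℝ) < 1 / 2) (by norm_num : (0:ℝ) < 1 / 2) (by norm_num)
  rw [Gamma_add_one hs.ne', mul_rpow hs.le hΓ.le] at h
  calc Gamma (s + 1 / 2) = Gamma (1 / 2 * s + 1 / 2 * (s + 1)) := by ring_nf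
    _ ≤ Gamma s ^ (1 / 2 : ℝ) * (s ^ (1 / 2 : ℝ) * Gamma s ^ (1 / 2 : ℝ)) := h
    _ = √s * Gamma s := by
      rw [mul_left_comm, ← rpow_add hΓ, sqrt_eq_rpow]; norm_num

theorem abs_inner_le_mul_norm_iff {E : Type*} [NormedAddCommGroup E] [InnerProductSpace ℝ E]
    {u : E} (hu : u ≠ 0) (y : E) (s : ℝ) :
    |⟪u, y⟫| ≤ s * ‖u‖ ↔ |⟪‖u‖⁻¹ • u, y⟫| ≤ s := by
  rw [real_inner_smul_left, abs_mul, abs_inv, abs_norm, inv_mul_le_iff₀ (norm_pos_iff.2 hu),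
    mul_comm]

theorem abs_sub_mul_round_div_le {δ : ℝ} (hδ : 0 < δ) (x : ℝ) :
    |x - δ * ((round (x / δ) : ℤ) : ℝ)| ≤ δ / 2 := by
  have h := abs_sub_round (x / δ)
  rw [show x - δ * ((round (x / δ) : ℤ) : ℝ) = δ * (x / δ - ((round (x / δ) : ℤ) : ℝ)) by
    field_simp, abs_mul, abs_of_pos hδ]
  nlinarith

theorem abs_sum_mul_le_of_sum_mul_round_eq_zero {ι : Type*} [Fintype ι] {δ : ℝ} (hδ : 0 < δ)
    {a y : ι → ℝ} (ha : ∀ i, |a i| ≤ 2) (h : ∑ i, a i * (δ * ((round (y i / δ) : ℤ) : ℝ)) = 0) :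
    |∑ i, a i * y i| ≤ Fintype.card ι * δ := calc
  |∑ i, a i * y i| = |∑ i, a i * (y i - δ * ((round (y i / δ) : ℤ) : ℝ))| := by
      simp only [mul_sub, Finset.sum_sub_distrib, h, sub_zero]
  _ ≤ ∑ i, |a i * (y i - δ * ((round (y i / δ) : ℤ) : ℝ))| := Finset.abs_sum_le_sum_abs _ _
  _ ≤ ∑ _i : ι, 2 * (δ / 2) := by
      gcongr with i
      rw [abs_mul]
      exact mul_le_mul (ha i) (abs_sub_mul_round_div_le hδ _) (abs_nonneg _) zero_le_two
  _ = Fintype.card ι * δ := by rw [Finset.sum_const, Finset.card_univ, nsmul_eq_mul]; ring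

section Volume

variable {E : Type*} [NormedAddCommGroup E] [InnerProductSpace ℝ E] [FiniteDimensional ℝ E]
  [MeasurableSpace E] [BorelSpace E]

theorem InnerProductSpace.volume_closedBall_of_finrank_eq_one (h : finrank ℝ E = 1) (x : E)
    (r : ℝ) : volume (closedBall x r) = ENNReal.ofReal (2 * r) := by
  have : Nontrivial E := Module.nontrivial_of_finrank_eq_succ h
  rw [InnerProductSpace.volume_closedBall, h, pow_one, ← ENNReal.ofReal_mul' (by positivity),
    mul_comm]
  congr 2
  rw [show ((1 : ℕ) : ℝ) / 2 + 1 = 1 / 2 + 1 by norm_num, Gamma_add_one (by norm_num),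
    Gamma_one_half_eq]
  field_simp

theorem InnerProductSpace.volume_closedBall_le_mul_volume_ball {F : Type*}
    [NormedAddCommGroup F] [InnerProductSpace ℝ F] [FiniteDimensional ℝ F] [MeasurableSpace F]
    [BorelSpace F] [Nontrivial F] (h : finrank ℝ E = finrank ℝ F + 1) :
    volume (closedBall (0 : F) 1) ≤ finrank ℝ E * volume (ball (0 : E) 1) := by
  have : Nontrivial E := Module.nontrivial_of_finrank_eq_succ h
  rw [InnerProductSpace.volume_closedBall, InnerProductSpace.volume_ball, h]
  generalize finrank ℝ F = k
  have hs : 0 < (k : ℝ) / 2 + 1 := by positivity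
  have hΓ : Gamma (((k + 1 : ℕ) : ℝ) / 2 + 1) ≤ (k + 1) * √π * Gamma (k / 2 + 1) := calc
    Gamma (((k + 1 : ℕ) : ℝ) / 2 + 1) = Gamma ((k / 2 + 1) + 1 / 2) := by push_cast; ring_nf
    _ ≤ √(k / 2 + 1) * Gamma (k / 2 + 1) := Gamma_add_half_le hs
    _ ≤ (k + 1) * √π * Gamma (k / 2 + 1) := by
      gcongr
      rw [← sqrt_sq (by positivity : (0:ℝ) ≤ k + 1), ← sqrt_mul (by positivity)]
      gcongr
      nlinarith [pi_gt_three, (by positivity : (0:ℝ) ≤ k)]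
  simp only [ENNReal.ofReal_one, one_pow, one_mul]
  rw [← ENNReal.ofReal_natCast, ← ENNReal.ofReal_mul (by positivity)]
  gcongr
  rw [mul_div_assoc', le_div_iff₀ (Gamma_pos_of_pos (by positivity)), pow_succ]
  calc √π ^ k / Gamma (k / 2 + 1) * Gamma (((k + 1 : ℕ) : ℝ) / 2 + 1)
      ≤ √π ^ k / Gamma (k / 2 + 1) * ((k + 1) * √π * Gamma (k / 2 + 1)) := by gcongr
    _ = _ := by field_simp; push_cast; ring

theorem volume_ball_inter_abs_inner_le_mul_volume_closedBall {e : E} (he : ‖e‖ = 1) (w : ℝ) :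
    volume (ball (0 : E) 1 ∩ {u | |⟪e, u⟫| ≤ w}) ≤
      ENNReal.ofReal (2 * w) * volume (closedBall (0 : (ℝ ∙ e)ᗮ) 1) := by
  set D := (ℝ ∙ e).orthogonalDecomposition
  have hsub : ball (0 : E) 1 ∩ {u | |⟪e, u⟫| ≤ w} ⊆
      D ⁻¹' (WithLp.ofLp ⁻¹' (closedBall 0 w ×ˢ closedBall 0 1)) := by
    rintro u ⟨hu, hw⟩
    have hnorm := WithLp.prod_norm_sq_eq_of_L2 (D u)
    rw [D.norm_map] at hnorm
    refine ⟨?_, ?_⟩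
    · rw [mem_closedBall_zero_iff, Submodule.orthogonalDecomposition_apply]
      change ‖(ℝ ∙ e).starProjection u‖ ≤ w
      rwa [Submodule.starProjection_unit_singleton ℝ he, norm_smul, he, mul_one]
    · rw [mem_ball_zero_iff] at hu
      rw [mem_closedBall_zero_iff]
      change ‖(D u).snd‖ ≤ 1
      nlinarith [norm_nonneg (D u).fst, norm_nonneg (D u).snd, norm_nonneg u]
  have hK : finrank ℝ (ℝ ∙ e) = 1 := finrank_span_singleton (norm_ne_zero_iff.mp (by simp [he]))
  calc volume (ball (0 : E) 1 ∩ {u | |⟪e, u⟫| ≤ w})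
      ≤ volume (D ⁻¹' (WithLp.ofLp ⁻¹' (closedBall 0 w ×ˢ closedBall 0 1))) := measure_mono hsub
    _ = volume (closedBall (0 : ℝ ∙ e) w ×ˢ closedBall (0 : (ℝ ∙ e)ᗮ) 1) := by
      rw [D.measurePreserving.measure_preimage (by measurability),
        (WithLp.volume_preserving_ofLp _ _).measure_preimage (by measurability)]
    _ = _ := by
      rw [Measure.volume_eq_prod, Measure.prod_prod,
        InnerProductSpace.volume_closedBall_of_finrank_eq_one hK]

theorem volume_ball_inter_abs_inner_le_mul_volume_ball (hE : 2 ≤ finrank ℝ E) {e : E}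
    (he : ‖e‖ = 1) (w : ℝ) :
    volume (ball (0 : E) 1 ∩ {u | |⟪e, u⟫| ≤ w}) ≤
      ENNReal.ofReal (2 * w * finrank ℝ E) * volume (ball (0 : E) 1) := by
  have hdim : finrank ℝ E = finrank ℝ (ℝ ∙ e)ᗮ + 1 := by
    rw [← (ℝ ∙ e).finrank_add_finrank_orthogonal,
      finrank_span_singleton (norm_ne_zero_iff.mp (by simp [he])), add_comm]
  have : Nontrivial ((ℝ ∙ e)ᗮ : Submodule ℝ E) :=
    Module.nontrivial_of_finrank_pos (R := ℝ) (by omega)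
  calc _ ≤ ENNReal.ofReal (2 * w) * volume (closedBall (0 : (ℝ ∙ e)ᗮ) 1) :=
        volume_ball_inter_abs_inner_le_mul_volume_closedBall he w
    _ ≤ ENNReal.ofReal (2 * w) * (finrank ℝ E * volume (ball (0 : E) 1)) := by
        gcongr; exact InnerProductSpace.volume_closedBall_le_mul_volume_ball hdim
    _ = _ := by
        rw [ENNReal.ofReal_mul' (Nat.cast_nonneg _), ENNReal.ofReal_natCast, mul_assoc]

end Volume

section RotationInvariant

variable {E : Type*} [NormedAddCommGroup E] [InnerProductSpace ℝ E] [MeasurableSpace E]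
  [BorelSpace E] {μ : Measure E}

theorem measure_abs_inner_le_eq_of_norm_eq (hinv : ∀ f : E ≃ₗᵢ[ℝ] E, μ.map f = μ) {v w : E}
    (h : ‖v‖ = ‖w‖) (t : ℝ) : μ {y | |⟪v, y⟫| ≤ t} = μ {y | |⟪w, y⟫| ≤ t} := by
  obtain ⟨f, rfl⟩ : ∃ f : E ≃ₗᵢ[ℝ] E, f v = w := ⟨_, Submodule.reflection_sub h⟩
  have hpre : {y | |⟪v, y⟫| ≤ t} = f ⁻¹' {y | |⟪f v, y⟫| ≤ t} := by
    ext y; simp [f.inner_map_map]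
  rw [hpre, ← f.coe_toMeasurableEquiv, ← MeasurableEquiv.map_apply, f.coe_toMeasurableEquiv,
    hinv]

variable [FiniteDimensional ℝ E] [IsProbabilityMeasure μ] {R : ℝ}

theorem measure_abs_inner_le_le_of_norm_eq_one (hE : 2 ≤ finrank ℝ E) (hR : 0 < R)
    (hsupp : ∀ᵐ y ∂μ, ‖y‖ = R) (hinv : ∀ f : E ≃ₗᵢ[ℝ] E, μ.map f = μ) {e : E} (he : ‖e‖ = 1)
    {s : ℝ} (hs : 0 ≤ s) :
    μ {y | |⟪e, y⟫| ≤ s} ≤ ENNReal.ofReal (2 * (s / R) * finrank ℝ E) := by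
  set B := ball (0 : E) 1
  set S : Set (E × E) := {p | |⟪p.1, p.2⟫| ≤ s * ‖p.1‖}
  have hS : MeasurableSet S := measurableSet_le (by fun_prop) (by fun_prop)
  have : Nontrivial E := Module.nontrivial_of_finrank_pos (R := ℝ) (by omega)
  have hB : volume B ≠ 0 := (measure_ball_pos volume 0 one_pos).ne'
  have hslice_fst : ∀ᵐ u ∂volume.restrict B, μ (Prod.mk u ⁻¹' S) = μ {y | |⟪e, y⟫| ≤ s} := by
    filter_upwards [ae_restrict_of_ae (Measure.ae_ne volume 0)] with u hu
    simp only [S, Set.preimage_ofPred_eq, abs_inner_le_mul_norm_iff hu]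
    exact measure_abs_inner_le_eq_of_norm_eq hinv (by
      rw [norm_smul, norm_inv, norm_norm, inv_mul_cancel₀ (norm_ne_zero_iff.2 hu), he]) s
  have hslice_snd : ∀ᵐ y ∂μ, volume.restrict B ((·, y) ⁻¹' S) ≤
      ENNReal.ofReal (2 * (s / R) * finrank ℝ E) * volume B := by
    filter_upwards [hsupp] with y hy
    have hy' : ‖R⁻¹ • y‖ = 1 := by
      rw [norm_smul, hy, norm_inv, norm_of_nonneg hR.le, inv_mul_cancel₀ hR.ne']
    rw [Measure.restrict_apply' measurableSet_ball]
    refine le_trans (measure_mono ?_)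
      (volume_ball_inter_abs_inner_le_mul_volume_ball hE hy' (s / R))
    rintro u ⟨hu, huB⟩
    refine ⟨huB, ?_⟩
    calc |⟪R⁻¹ • y, u⟫| = R⁻¹ * |⟪u, y⟫| := by
          rw [real_inner_smul_left, abs_mul, abs_inv, abs_of_pos hR, real_inner_comm]
      _ ≤ R⁻¹ * (s * 1) := by
          gcongr
          exact hu.trans (by gcongr; exact (mem_ball_zero_iff.mp huB).le)
      _ = s / R := by ring
  have hprod_eq : (volume.restrict B).prod μ S = μ {y | |⟪e, y⟫| ≤ s} * volume B := by
    rw [Measure.prod_apply hS, lintegral_congr_ae hslice_fst, lintegral_const,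
      Measure.restrict_apply_univ]
  have hprod_le : (volume.restrict B).prod μ S ≤
      ENNReal.ofReal (2 * (s / R) * finrank ℝ E) * volume B := by
    rw [Measure.prod_apply_symm hS]
    refine (lintegral_mono_ae hslice_snd).trans_eq ?_
    rw [lintegral_const, measure_univ, mul_one]
  exact (ENNReal.mul_le_mul_iff_left hB measure_ball_lt_top.ne).mp (hprod_eq ▸ hprod_le)

theorem measure_abs_inner_le_le_of_ne_zero (hE : 2 ≤ finrank ℝ E) (hR : 0 < R)
    (hsupp : ∀ᵐ y ∂μ, ‖y‖ = R) (hinv : ∀ f : E ≃ₗᵢ[ℝ] E, μ.map f = μ) {v : E} (hv : v ≠ 0)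
    {t : ℝ} (ht : 0 ≤ t) :
    μ {y | |⟪v, y⟫| ≤ t} ≤ ENNReal.ofReal (2 * t * finrank ℝ E / (‖v‖ * R)) := by
  have hv' : 0 < ‖v‖ := norm_pos_iff.2 hv
  have hband : {y | |⟪v, y⟫| ≤ t} = {y | |⟪‖v‖⁻¹ • v, y⟫| ≤ t / ‖v‖} := by
    ext y
    have h := abs_inner_le_mul_norm_iff hv y (t / ‖v‖)
    rwa [div_mul_cancel₀ _ hv'.ne'] at h
  calc μ {y | |⟪v, y⟫| ≤ t} = μ {y | |⟪‖v‖⁻¹ • v, y⟫| ≤ t / ‖v‖} := by rw [hband]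
    _ ≤ ENNReal.ofReal (2 * (t / ‖v‖ / R) * finrank ℝ E) :=
      measure_abs_inner_le_le_of_norm_eq_one hE hR hsupp hinv
        (by rw [norm_smul, norm_inv, norm_norm, inv_mul_cancel₀ hv'.ne']) (by positivity)
    _ = _ := by congr 1; field_simp

end RotationInvariant

theorem stmt18_general {n : ℕ} (hn : 2 ≤ n) (R δ : ℝ) (hR : 0 < R) (hδ : 0 < δ)
    (μ : Measure (EuclideanSpace ℝ (Fin n))) [IsProbabilityMeasure μ]
    (hsupp : ∀ᵐ y ∂μ, ‖y‖ = R)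
    (hinv : ∀ f : EuclideanSpace ℝ (Fin n) ≃ₗᵢ[ℝ] EuclideanSpace ℝ (Fin n),
      Measure.map f μ = μ)
    (a : Fin n → ℝ) (ha : ∀ i, |a i| ≤ 2) (hane : a ≠ 0) :
    (μ {y : EuclideanSpace ℝ (Fin n) |
        ∑ i, a i * (δ * ((round (y i / δ) : ℤ) : ℝ)) = 0}).toReal ≤
      2 * δ * (n : ℝ) ^ 2 / (Real.sqrt (∑ i, a i ^ 2) * R) := by
  set v : EuclideanSpace ℝ (Fin n) := WithLp.toLp 2 a
  have hv : v ≠ 0 := fun h ↦ hane (congrArg WithLp.ofLp h)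
  have hnorm : ‖v‖ = √(∑ i, a i ^ 2) := by simp [v, EuclideanSpace.norm_eq]
  have hsub : {y : EuclideanSpace ℝ (Fin n) | ∑ i, a i * (δ * ((round (y i / δ) : ℤ) : ℝ)) = 0}
      ⊆ {y | |⟪v, y⟫| ≤ n * δ} := fun y hy ↦ by
    simpa [v, PiLp.inner_apply, mul_comm] using
      abs_sum_mul_le_of_sum_mul_round_eq_zero hδ ha hy
  have hband := measure_abs_inner_le_le_of_ne_zero (by simpa using hn) hR hsupp hinv hv
    (by positivity : (0 : ℝ) ≤ n * δ)
  refine ENNReal.toReal_le_of_le_ofReal (by positivity) ((measure_mono hsub).trans hband)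
    |>.trans_eq ?_
  rw [finrank_euclideanSpace_fin, hnorm]
  ring

/-- Let `y` be uniform on the sphere of radius `R` in `ℝⁿ` (encoded as: a rotation-invariant
probability measure supported on the sphere), and let `ỹ` round each coordinate of `y` to a
multiple of `δ`. Then for any fixed nonzero `a` with `|a_i| ≤ 2` and `Σ a_i = 0`, the
probability that `aᵀ ỹ = 0` is at most `2δn²/(‖a‖₂ R)`. -/
theorem stmt18 {n : ℕ} (hn : 2 ≤ n) (R δ : ℝ) (hR : 0 < R) (hδ : 0 < δ)
    (μ : Measure (EuclideanSpace ℝ (Fin n))) [IsProbabilityMeasure μ]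
    (hsupp : ∀ᵐ y ∂μ, ‖y‖ = R)
    (hinv : ∀ f : EuclideanSpace ℝ (Fin n) ≃ₗᵢ[ℝ] EuclideanSpace ℝ (Fin n),
      Measure.map f μ = μ)
    (a : Fin n → ℝ) (ha : ∀ i, |a i| ≤ 2) (hsum : ∑ i, a i = 0) (hane : a ≠ 0) :
    (μ {y : EuclideanSpace ℝ (Fin n) |
        ∑ i, a i * (δ * ((round (y i / δ) : ℤ) : ℝ)) = 0}).toReal ≤
      2 * δ * (n : ℝ) ^ 2 / (Real.sqrt (∑ i, a i ^ 2) * R) :=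
  stmt18_general hn R δ hR hδ μ hsupp hinv a ha hane
end
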